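/- Let p ≥ q ≥ 2 be integers and let Z1 = Q_p and Z2 = Q_q be the modified 2^p-ary and 2^q-ary QAM constellations. Then for every real α > 0, the minimum, over all pairs (y1, y2), (ŷ1, ŷ2) ∈ Z1 × Z2 with (y1, y2) ≠ (ŷ1, ŷ2), of α²(|y1 − ŷ1|² + |y2 − ŷ2|²) / ((1 + α²(|y1|² + |y2|²))·(1 + α²(|ŷ1|² + |ŷ2|²))) equals 4α² / ((1 + α²(E(p) + E(q)))·(1 + α²(E(p) + E_s(q)))). -/

import Mathlib

/-- The modified `2^K`-ary QAM constellation. -/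
noncomputable def modQAM (K : ℕ) : Set ℂ :=
  if K = 3 then
    ({1 + 3 * Complex.I, 1 + Complex.I, 3 - Complex.I, 1 - Complex.I,
      -1 - 3 * Complex.I, -1 - Complex.I, -3 + Complex.I, -1 + Complex.I} : Set ℂ)
  else if K % 2 = 0 then
    {z | ∃ m n : ℤ, -(2 : ℤ) ^ ((K - 2) / 2) + 1 ≤ m ∧ m ≤ (2 : ℤ) ^ ((K - 2) / 2) ∧
      -(2 : ℤ) ^ ((K - 2) / 2) + 1 ≤ n ∧ n ≤ (2 : ℤ) ^ ((K - 2) / 2) ∧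
      z = (2 * (m : ℂ) - 1) + (2 * (n : ℂ) - 1) * Complex.I}
  else
    {z | ∃ m n : ℤ, -(3 * (2 : ℤ) ^ ((K - 5) / 2)) + 1 ≤ m ∧ m ≤ 3 * (2 : ℤ) ^ ((K - 5) / 2) ∧
      -(2 : ℤ) ^ ((K - 3) / 2) + 1 ≤ n ∧ n ≤ (2 : ℤ) ^ ((K - 3) / 2) ∧
      z = (2 * (m : ℂ) - 1) + (2 * (n : ℂ) - 1) * Complex.I} ∪
    {z | ∃ m n : ℤ, -(2 : ℤ) ^ ((K - 3) / 2) + 1 ≤ m ∧ m ≤ (2 : ℤ) ^ ((K - 3) / 2) ∧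
      -(3 * (2 : ℤ) ^ ((K - 5) / 2)) + 1 ≤ n ∧ n ≤ 3 * (2 : ℤ) ^ ((K - 5) / 2) ∧
      z = (2 * (m : ℂ) - 1) + (2 * (n : ℂ) - 1) * Complex.I}

/-- `Eng K` is the largest squared modulus of a point of the modified
`2^K`-ary QAM constellation. -/
noncomputable def Eng (K : ℕ) : ℝ :=
  if K = 2 then 2
  else if K = 3 then 10
  else if K % 2 = 0 then 2 * ((2 : ℝ) ^ (K / 2) - 1) ^ 2
  else ((2 : ℝ) ^ ((K - 1) / 2) - 1) ^ 2 + (3 * (2 : ℝ) ^ ((K - 3) / 2) - 1) ^ 2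

/-- `EngS K` is the larger squared modulus among the nearest neighbors of a
largest-energy corner point of the modified `2^K`-ary QAM constellation
(with the convention `EngS 2 = EngS 3 = 2`). -/
noncomputable def EngS (K : ℕ) : ℝ :=
  if K = 2 then 2
  else if K = 3 then 2
  else if K % 2 = 0 then ((2 : ℝ) ^ (K / 2) - 1) ^ 2 + ((2 : ℝ) ^ (K / 2) - 3) ^ 2
  else ((2 : ℝ) ^ ((K - 1) / 2) - 3) ^ 2 + (3 * (2 : ℝ) ^ ((K - 3) / 2) - 1) ^ 2

/-!
Every point of `Q_K` is an odd lattice point `a + b i` in the cross `|a| ≤ A, |b| ≤ B` or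
`|a| ≤ B, |b| ≤ A` (for `K ≠ 3` it is exactly this set), with `E(K) = A² + B²` and
`E_s(K) = A² + (B - 2)²`. So distinct points are at squared distance `4` or at least `8`, and two
points at squared distance `4` differ by `2` in one coordinate: the one nearer the centre arises
from the other by pulling a coordinate of absolute value `≥ 1` inward by `2`, which leaves its
energy at most `E_s(K)`.

For a distinct pair in `Q_p × Q_q` at squared distance at least `8`, the crude bound
`(1 + α²(E(p) + E(q)))²` on the denominator suffices. Otherwise the pair is a nearest-neighbour
step in a single coordinate, and one of its two energies is at most `E(p) + E_s(q)`, using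
`E(q) - E_s(q) ≤ E(p) - E_s(p)` when the step is in the first coordinate. The bound is attained
with `y₁ = ŷ₁` a corner of `Q_p` and `y₂, ŷ₂` a corner of `Q_q` and its inner neighbour.
-/

open Complex

/-- The data of a constellation on which the minimum coding gain of a product depends. -/
structure IsQAMProfile (Z : Set ℂ) (E S : ℝ) : Prop where
  norm_sq_le : ∀ z ∈ Z, ‖z‖ ^ 2 ≤ E
  norm_sub_sq : ∀ y ∈ Z, ∀ z ∈ Z, y ≠ z → ‖y - z‖ ^ 2 = 4 ∨ 8 ≤ ‖y - z‖ ^ 2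
  neighbor : ∀ y ∈ Z, ∀ z ∈ Z, ‖y - z‖ ^ 2 = 4 → ‖y‖ ^ 2 ≤ S ∨ ‖z‖ ^ 2 ≤ S
  corner : ∃ y ∈ Z, ∃ z ∈ Z, ‖y‖ ^ 2 = E ∧ ‖z‖ ^ 2 = S ∧ ‖y - z‖ ^ 2 = 4

lemma four_div_le_div_of_cases {t d u v M N : ℝ} (ht : 0 ≤ t) (hu : 0 ≤ u) (hv : 0 ≤ v)
    (huM : u ≤ M) (hvM : v ≤ M) (hMN : M ≤ 2 * N)
    (hd : 8 ≤ d ∨ (d = 4 ∧ (u ≤ N ∨ v ≤ N))) :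
    4 / ((1 + t * M) * (1 + t * N)) ≤ d / ((1 + t * u) * (1 + t * v)) := by
  have hN : 0 ≤ N := by linarith
  have hM : 0 ≤ M := hu.trans huM
  rw [div_le_div_iff₀ (by positivity) (by positivity)]
  rcases hd with hd | ⟨rfl, huN | hvN⟩
  · have hMN' : 1 + t * M ≤ 2 * (1 + t * N) := by nlinarith
    calc 4 * ((1 + t * u) * (1 + t * v))
        ≤ 4 * ((1 + t * M) * (1 + t * M)) := by gcongr
      _ ≤ 4 * ((1 + t * M) * (2 * (1 + t * N))) := by gcongr
      _ = 8 * ((1 + t * M) * (1 + t * N)) := by ring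
      _ ≤ d * ((1 + t * M) * (1 + t * N)) := by gcongr
  · calc 4 * ((1 + t * u) * (1 + t * v))
        ≤ 4 * ((1 + t * N) * (1 + t * M)) := by gcongr
      _ = 4 * ((1 + t * M) * (1 + t * N)) := by ring
  · calc 4 * ((1 + t * u) * (1 + t * v))
        ≤ 4 * ((1 + t * M) * (1 + t * N)) := by gcongr

namespace IsQAMProfile

variable {Z Z₁ Z₂ : Set ℂ} {E S E₁ S₁ E₂ S₂ : ℝ}

lemma nonneg (h : IsQAMProfile Z E S) : 0 ≤ S := by
  obtain ⟨-, -, z, -, -, hS, -⟩ := h.corner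
  exact hS ▸ sq_nonneg ‖z‖

lemma le (h : IsQAMProfile Z E S) : S ≤ E := by
  obtain ⟨-, -, z, hz, -, hS, -⟩ := h.corner
  exact hS ▸ h.norm_sq_le z hz

lemma eq_or_neighbor_or_far (h : IsQAMProfile Z E S) {y z : ℂ} (hy : y ∈ Z) (hz : z ∈ Z) :
    y = z ∨ (‖y - z‖ ^ 2 = 4 ∧ (‖y‖ ^ 2 ≤ S ∨ ‖z‖ ^ 2 ≤ S)) ∨ 8 ≤ ‖y - z‖ ^ 2 := by
  by_cases hyz : y = z
  · exact Or.inl hyz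
  rcases h.norm_sub_sq y hy z hz hyz with h4 | h8
  · exact Or.inr (Or.inl ⟨h4, h.neighbor y hy z hz h4⟩)
  · exact Or.inr (Or.inr h8)

lemma prod_far_or_neighbor (h₁ : IsQAMProfile Z₁ E₁ S₁) (h₂ : IsQAMProfile Z₂ E₂ S₂)
    (hgap : E₂ - S₂ ≤ E₁ - S₁) {y₁ z₁ y₂ z₂ : ℂ} (hy₁ : y₁ ∈ Z₁) (hz₁ : z₁ ∈ Z₁)
    (hy₂ : y₂ ∈ Z₂) (hz₂ : z₂ ∈ Z₂) (hne : (y₁, y₂) ≠ (z₁, z₂)) :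
    8 ≤ ‖y₁ - z₁‖ ^ 2 + ‖y₂ - z₂‖ ^ 2 ∨
      (‖y₁ - z₁‖ ^ 2 + ‖y₂ - z₂‖ ^ 2 = 4 ∧
        (‖y₁‖ ^ 2 + ‖y₂‖ ^ 2 ≤ E₁ + S₂ ∨ ‖z₁‖ ^ 2 + ‖z₂‖ ^ 2 ≤ E₁ + S₂)) := by
  have hy₁E := h₁.norm_sq_le y₁ hy₁
  have hz₁E := h₁.norm_sq_le z₁ hz₁
  have hy₂E := h₂.norm_sq_le y₂ hy₂
  have hz₂E := h₂.norm_sq_le z₂ hz₂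
  have hd₁_nonneg := sq_nonneg ‖y₁ - z₁‖
  have hd₂_nonneg := sq_nonneg ‖y₂ - z₂‖
  rcases h₁.eq_or_neighbor_or_far hy₁ hz₁ with rfl | ⟨hd₁, hn₁⟩ | hd₁
  · rcases h₂.eq_or_neighbor_or_far hy₂ hz₂ with rfl | ⟨hd₂, hn₂⟩ | hd₂
    · exact absurd rfl hne
    · rw [sub_self, norm_zero, hd₂]
      right
      refine ⟨by norm_num, ?_⟩
      rcases hn₂ with hn₂ | hn₂
      exacts [Or.inl (by linarith), Or.inr (by linarith)]
    · left
      simpa using hd₂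
  · rcases h₂.eq_or_neighbor_or_far hy₂ hz₂ with rfl | ⟨hd₂, -⟩ | hd₂
    · rw [sub_self, norm_zero, hd₁]
      right
      refine ⟨by norm_num, ?_⟩
      rcases hn₁ with hn₁ | hn₁
      exacts [Or.inl (by linarith [h₂.le]), Or.inr (by linarith [h₂.le])]
    all_goals left; linarith
  · left; linarith

theorem isLeast_codingGain (h₁ : IsQAMProfile Z₁ E₁ S₁) (h₂ : IsQAMProfile Z₂ E₂ S₂)
    (hgap : E₂ - S₂ ≤ E₁ - S₁) (α : ℝ) :
    IsLeast
      {g : ℝ | ∃ y1 ∈ Z₁, ∃ y2 ∈ Z₂, ∃ z1 ∈ Z₁, ∃ z2 ∈ Z₂,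
        (y1, y2) ≠ (z1, z2) ∧
        g = α ^ 2 * (‖y1 - z1‖ ^ 2 + ‖y2 - z2‖ ^ 2) /
            ((1 + α ^ 2 * (‖y1‖ ^ 2 + ‖y2‖ ^ 2)) *
              (1 + α ^ 2 * (‖z1‖ ^ 2 + ‖z2‖ ^ 2)))}
      (4 * α ^ 2 / ((1 + α ^ 2 * (E₁ + E₂)) * (1 + α ^ 2 * (E₁ + S₂)))) := by
  constructor
  · obtain ⟨c₁, hc₁, -, -, hc₁E, -, -⟩ := h₁.corner
    obtain ⟨c₂, hc₂, n₂, hn₂, hc₂E, hn₂S, hd⟩ := h₂.corner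
    refine ⟨c₁, hc₁, c₂, hc₂, c₁, hc₁, n₂, hn₂, fun h => ?_, ?_⟩
    · rw [(Prod.mk.inj h).2, sub_self, norm_zero] at hd
      norm_num at hd
    · rw [sub_self, norm_zero, hc₁E, hc₂E, hn₂S, hd]
      ring
  · rintro g ⟨y₁, hy₁, y₂, hy₂, z₁, hz₁, z₂, hz₂, hne, rfl⟩
    rw [mul_comm 4, mul_div_assoc, mul_div_assoc]
    refine mul_le_mul_of_nonneg_left (four_div_le_div_of_cases (sq_nonneg α) (by positivity)
      (by positivity) ?_ ?_ ?_ (h₁.prod_far_or_neighbor h₂ hgap hy₁ hz₁ hy₂ hz₂ hne))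
      (sq_nonneg α)
    · exact add_le_add (h₁.norm_sq_le y₁ hy₁) (h₂.norm_sq_le y₂ hy₂)
    · exact add_le_add (h₁.norm_sq_le z₁ hz₁) (h₂.norm_sq_le z₂ hz₂)
    · linarith [h₁.nonneg, h₁.le, h₂.nonneg]

end IsQAMProfile

lemma norm_intCast_add_mul_I_sq (a b : ℤ) :
    ‖(a + b * I : ℂ)‖ ^ 2 = ((a ^ 2 + b ^ 2 : ℤ) : ℝ) := by
  rw [Complex.sq_norm, ← ofReal_intCast, ← ofReal_intCast, normSq_add_mul_I]
  push_cast
  ring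

lemma norm_intCast_add_mul_I_sub_sq (a b a' b' : ℤ) :
    ‖(a + b * I : ℂ) - (a' + b' * I)‖ ^ 2 = (((a - a') ^ 2 + (b - b') ^ 2 : ℤ) : ℝ) := by
  rw [← norm_intCast_add_mul_I_sq]
  push_cast
  ring_nf

lemma Int.sq_add_sq_eq_four_or_ge_eight {c e : ℤ} (hc : Even c) (he : Even e)
    (hne : c ≠ 0 ∨ e ≠ 0) : c ^ 2 + e ^ 2 = 4 ∨ 8 ≤ c ^ 2 + e ^ 2 := by
  obtain ⟨k, rfl⟩ := hc
  obtain ⟨l, rfl⟩ := he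
  have hpos : 0 < k ^ 2 + l ^ 2 := by
    rcases hne with h | h
    · nlinarith [sq_pos_of_ne_zero (show k ≠ 0 by omega), sq_nonneg l]
    · nlinarith [sq_pos_of_ne_zero (show l ≠ 0 by omega), sq_nonneg k]
  have h4 : (k + k) ^ 2 + (l + l) ^ 2 = 4 * (k ^ 2 + l ^ 2) := by ring
  omega

lemma Int.eq_of_sq_add_sq_eq_four {c e : ℤ} (hc : Even c) (he : Even e)
    (h : c ^ 2 + e ^ 2 = 4) : ((c = 2 ∨ c = -2) ∧ e = 0) ∨ (c = 0 ∧ (e = 2 ∨ e = -2)) := by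
  obtain ⟨k, rfl⟩ := hc
  obtain ⟨l, rfl⟩ := he
  obtain ⟨hk₁, hk₂⟩ : -1 ≤ k ∧ k ≤ 1 := by constructor <;> nlinarith [sq_nonneg l]
  obtain ⟨hl₁, hl₂⟩ : -1 ≤ l ∧ l ≤ 1 := by constructor <;> nlinarith [sq_nonneg k]
  interval_cases k <;> interval_cases l <;> simp_all

lemma Int.sub_two_sq_le_of_odd {x C : ℤ} (hC : Odd C) (hx : 1 ≤ x) (hxC : x ≤ C) :
    (x - 2) ^ 2 ≤ (C - 2) ^ 2 := by
  obtain ⟨k, rfl⟩ := hC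
  rcases (show k = 0 ∨ 1 ≤ k by omega) with rfl | hk
  · obtain rfl : x = 1 := by omega
    norm_num
  · nlinarith

def InCross (A B a b : ℤ) : Prop :=
  (|a| ≤ A ∧ |b| ≤ B) ∨ (|a| ≤ B ∧ |b| ≤ A)

namespace InCross

variable {A B a b : ℤ}

lemma swap (h : InCross A B a b) : InCross A B b a := by
  unfold InCross at *
  tauto

lemma neg (h : InCross A B a b) : InCross A B (-a) b := by
  simpa only [InCross, abs_neg] using h

lemma sq_add_sq_le (h : InCross A B a b) : a ^ 2 + b ^ 2 ≤ A ^ 2 + B ^ 2 := by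
  rcases h with ⟨ha, hb⟩ | ⟨ha, hb⟩ <;> rw [abs_le] at ha hb <;> nlinarith

lemma sub_two_sq_add_sq_le (hA : Odd A) (hB : Odd B) (hBA : B ≤ A) (h : InCross A B a b)
    (ha : 1 ≤ a) : (a - 2) ^ 2 + b ^ 2 ≤ A ^ 2 + (B - 2) ^ 2 := by
  rcases h with ⟨haA, hbB⟩ | ⟨haB, hbA⟩
  · have h₁ := Int.sub_two_sq_le_of_odd hA ha (le_of_abs_le haA)
    have h₂ := sq_le_sq' (abs_le.mp hbB).1 (abs_le.mp hbB).2
    nlinarith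
  · have h₁ := Int.sub_two_sq_le_of_odd hB ha (le_of_abs_le haB)
    have h₂ := sq_le_sq' (abs_le.mp hbA).1 (abs_le.mp hbA).2
    linarith

/-- Whichever of `a`, `a + 2` is nearer to `0` is the other pulled inward by `2`. -/
lemma step (hA : Odd A) (hB : Odd B) (hBA : B ≤ A) (h : InCross A B a b)
    (h' : InCross A B (a + 2) b) :
    a ^ 2 + b ^ 2 ≤ A ^ 2 + (B - 2) ^ 2 ∨ (a + 2) ^ 2 + b ^ 2 ≤ A ^ 2 + (B - 2) ^ 2 := by
  rcases le_or_gt (-1) a with ha | ha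
  · left
    simpa using h'.sub_two_sq_add_sq_le hA hB hBA (by omega)
  · right
    have := h.neg.sub_two_sq_add_sq_le hA hB hBA (by omega)
    linarith [show (-a - 2) ^ 2 = (a + 2) ^ 2 by ring]

lemma neighbor (hA : Odd A) (hB : Odd B) (hBA : B ≤ A) {a' b' : ℤ}
    (h : InCross A B a b) (h' : InCross A B a' b') (hc : Even (a - a')) (he : Even (b - b'))
    (hd : (a - a') ^ 2 + (b - b') ^ 2 = 4) :
    a ^ 2 + b ^ 2 ≤ A ^ 2 + (B - 2) ^ 2 ∨ a' ^ 2 + b' ^ 2 ≤ A ^ 2 + (B - 2) ^ 2 := by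
  rcases Int.eq_of_sq_add_sq_eq_four hc he hd with ⟨hc | hc, he⟩ | ⟨hc, he | he⟩
  · obtain ⟨rfl, rfl⟩ : a = a' + 2 ∧ b = b' := by omega
    exact (step hA hB hBA h' h).symm
  · obtain ⟨rfl, rfl⟩ : a' = a + 2 ∧ b' = b := by omega
    exact step hA hB hBA h h'
  · obtain ⟨rfl, rfl⟩ : a = a' ∧ b = b' + 2 := by omega
    have := step hA hB hBA h'.swap h.swap
    rw [add_comm (b' ^ 2), add_comm ((b' + 2) ^ 2)] at this
    exact this.symm
  · obtain ⟨rfl, rfl⟩ : a' = a ∧ b' = b + 2 := by omega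
    have := step hA hB hBA h.swap h'.swap
    rwa [add_comm (b ^ 2), add_comm ((b + 2) ^ 2)] at this

end InCross

def oddBox (A B : ℤ) : Set ℂ :=
  {z | ∃ a b : ℤ, Odd a ∧ Odd b ∧ |a| ≤ A ∧ |b| ≤ B ∧ z = a + b * I}

def crossQAM (A B : ℤ) : Set ℂ :=
  {z | ∃ a b : ℤ, Odd a ∧ Odd b ∧ InCross A B a b ∧ z = a + b * I}

lemma setOf_two_mul_sub_one_eq_oddBox (M N : ℤ) :
    {z : ℂ | ∃ m n : ℤ, -M + 1 ≤ m ∧ m ≤ M ∧ -N + 1 ≤ n ∧ n ≤ N ∧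
      z = (2 * (m : ℂ) - 1) + (2 * (n : ℂ) - 1) * I} = oddBox (2 * M - 1) (2 * N - 1) := by
  ext z
  constructor
  · rintro ⟨m, n, hm₁, hm₂, hn₁, hn₂, rfl⟩
    refine ⟨2 * m - 1, 2 * n - 1, ⟨m - 1, by ring⟩, ⟨n - 1, by ring⟩, ?_, ?_,
      by push_cast; ring⟩ <;> rw [abs_le] <;> omega
  · rintro ⟨_, _, ⟨m, rfl⟩, ⟨n, rfl⟩, hm, hn, rfl⟩
    rw [abs_le] at hm hn
    exact ⟨m + 1, n + 1, by omega, by omega, by omega, by omega, by push_cast; ring⟩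

lemma oddBox_union_oddBox (A B : ℤ) : oddBox A B ∪ oddBox B A = crossQAM A B := by
  ext z
  simp only [oddBox, crossQAM, InCross, Set.mem_union, Set.mem_ofPred_eq]
  constructor
  · rintro (⟨a, b, ha, hb, haA, hbB, rfl⟩ | ⟨a, b, ha, hb, haB, hbA, rfl⟩)
    exacts [⟨a, b, ha, hb, Or.inl ⟨haA, hbB⟩, rfl⟩, ⟨a, b, ha, hb, Or.inr ⟨haB, hbA⟩, rfl⟩]
  · rintro ⟨a, b, ha, hb, ⟨haA, hbB⟩ | ⟨haB, hbA⟩, rfl⟩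
    exacts [Or.inl ⟨a, b, ha, hb, haA, hbB, rfl⟩, Or.inr ⟨a, b, ha, hb, haB, hbA, rfl⟩]

namespace crossQAM

variable {A B : ℤ} {y z : ℂ}

lemma norm_sq_le (hz : z ∈ crossQAM A B) : ‖z‖ ^ 2 ≤ (A : ℝ) ^ 2 + (B : ℝ) ^ 2 := by
  obtain ⟨a, b, -, -, hab, rfl⟩ := hz
  rw [norm_intCast_add_mul_I_sq]
  exact_mod_cast hab.sq_add_sq_le

lemma norm_sub_sq (hy : y ∈ crossQAM A B) (hz : z ∈ crossQAM A B) (hne : y ≠ z) :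
    ‖y - z‖ ^ 2 = 4 ∨ 8 ≤ ‖y - z‖ ^ 2 := by
  obtain ⟨a, b, ha, hb, -, rfl⟩ := hy
  obtain ⟨a', b', ha', hb', -, rfl⟩ := hz
  have hne' : a - a' ≠ 0 ∨ b - b' ≠ 0 := by
    by_contra! h
    rw [sub_eq_zero.mp h.1, sub_eq_zero.mp h.2] at hne
    exact hne rfl
  rw [norm_intCast_add_mul_I_sub_sq]
  exact_mod_cast Int.sq_add_sq_eq_four_or_ge_eight (ha.sub_odd ha') (hb.sub_odd hb') hne'

lemma neighbor (hA : Odd A) (hB : Odd B) (hBA : B ≤ A) (hy : y ∈ crossQAM A B)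
    (hz : z ∈ crossQAM A B) (hd : ‖y - z‖ ^ 2 = 4) :
    ‖y‖ ^ 2 ≤ (A : ℝ) ^ 2 + ((B : ℝ) - 2) ^ 2 ∨ ‖z‖ ^ 2 ≤ (A : ℝ) ^ 2 + ((B : ℝ) - 2) ^ 2 := by
  obtain ⟨a, b, ha, hb, hab, rfl⟩ := hy
  obtain ⟨a', b', ha', hb', hab', rfl⟩ := hz
  rw [norm_intCast_add_mul_I_sub_sq] at hd
  rw [norm_intCast_add_mul_I_sq, norm_intCast_add_mul_I_sq]
  exact_mod_cast hab.neighbor hA hB hBA hab' (ha.sub_odd ha') (hb.sub_odd hb')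
    (by exact_mod_cast hd)

lemma isQAMProfile (hA : Odd A) (hB : Odd B) (hB₁ : 1 ≤ B) (hBA : B ≤ A) :
    IsQAMProfile (crossQAM A B) ((A : ℝ) ^ 2 + (B : ℝ) ^ 2) ((A : ℝ) ^ 2 + ((B : ℝ) - 2) ^ 2) where
  norm_sq_le _ hz := norm_sq_le hz
  norm_sub_sq _ hy _ hz := norm_sub_sq hy hz
  neighbor _ hy _ hz := neighbor hA hB hBA hy hz
  corner := by
    have hA' : |A| ≤ A := (abs_of_nonneg (by omega)).le
    have hcross : InCross A B A B := Or.inl ⟨hA', (abs_of_nonneg (by omega)).le⟩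
    have hcross' : InCross A B A (B - 2) := Or.inl ⟨hA', by rw [abs_le]; omega⟩
    refine ⟨A + B * I, ⟨A, B, hA, hB, hcross, rfl⟩, A + (B - 2 : ℤ) * I,
      ⟨A, B - 2, hA, hB.sub_even even_two, hcross', rfl⟩, ?_, ?_, ?_⟩
    · rw [norm_intCast_add_mul_I_sq]; push_cast; ring
    · rw [norm_intCast_add_mul_I_sq]; push_cast; ring
    · rw [norm_intCast_add_mul_I_sub_sq]; norm_num

end crossQAM

lemma modQAM_three_subset : modQAM 3 ⊆ crossQAM 3 1 := by
  intro z hz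
  simp only [modQAM] at hz
  rcases hz with rfl | rfl | rfl | rfl | rfl | rfl | rfl | rfl
  · exact ⟨1, 3, by decide, by decide, by norm_num [InCross], by push_cast; ring⟩
  · exact ⟨1, 1, by decide, by decide, by norm_num [InCross], by push_cast; ring⟩
  · exact ⟨3, -1, by decide, by decide, by norm_num [InCross], by push_cast; ring⟩
  · exact ⟨1, -1, by decide, by decide, by norm_num [InCross], by push_cast; ring⟩
  · exact ⟨-1, -3, by decide, by decide, by norm_num [InCross], by push_cast; ring⟩
  · exact ⟨-1, -1, by decide, by decide, by norm_num [InCross], by push_cast; ring⟩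
  · exact ⟨-3, 1, by decide, by decide, by norm_num [InCross], by push_cast; ring⟩
  · exact ⟨-1, 1, by decide, by decide, by norm_num [InCross], by push_cast; ring⟩

lemma isQAMProfile_modQAM_three : IsQAMProfile (modQAM 3) 10 2 where
  norm_sq_le _ hz := (crossQAM.norm_sq_le (modQAM_three_subset hz)).trans_eq (by norm_num)
  norm_sub_sq _ hy _ hz := crossQAM.norm_sub_sq (modQAM_three_subset hy) (modQAM_three_subset hz)
  neighbor y hy z hz hd := by
    simp only [modQAM] at hy hz
    rcases hy with rfl | rfl | rfl | rfl | rfl | rfl | rfl | rfl <;>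
      rcases hz with rfl | rfl | rfl | rfl | rfl | rfl | rfl | rfl <;>
      norm_num [Complex.sq_norm, normSq_apply] at hd <;> norm_num [Complex.sq_norm, normSq_apply]
  corner := ⟨1 + 3 * I, by simp [modQAM], 1 + I, by simp [modQAM], by
    norm_num [Complex.sq_norm, normSq_apply]⟩

lemma exists_modQAM_eq_crossQAM {K : ℕ} (hK : 2 ≤ K) (h3 : K ≠ 3) :
    ∃ A B : ℤ, Odd A ∧ Odd B ∧ 1 ≤ B ∧ B ≤ A ∧ modQAM K = crossQAM A B ∧
      Eng K = (A : ℝ) ^ 2 + (B : ℝ) ^ 2 ∧ EngS K = (A : ℝ) ^ 2 + ((B : ℝ) - 2) ^ 2 := by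
  rcases Nat.even_or_odd' K with ⟨j, rfl | rfl⟩
  · obtain ⟨j, rfl⟩ : ∃ i, j = i + 1 := ⟨j - 1, by omega⟩
    have hs : (1 : ℤ) ≤ 2 ^ j := one_le_pow₀ one_le_two
    refine ⟨2 * 2 ^ j - 1, 2 * 2 ^ j - 1, ⟨2 ^ j - 1, by ring⟩, ⟨2 ^ j - 1, by ring⟩,
      by omega, le_rfl, ?_, ?_, ?_⟩
    · rw [modQAM, if_neg h3, if_pos (by omega), show (2 * (j + 1) - 2) / 2 = j by omega,
        setOf_two_mul_sub_one_eq_oddBox, ← oddBox_union_oddBox, Set.union_self]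
    · rcases j with _ | j
      · norm_num [Eng]
      · rw [Eng, if_neg (by omega), if_neg h3, if_pos (by omega),
          show 2 * (j + 1 + 1) / 2 = j + 2 by omega]
        push_cast
        ring
    · rcases j with _ | j
      · norm_num [EngS]
      · rw [EngS, if_neg (by omega), if_neg h3, if_pos (by omega),
          show 2 * (j + 1 + 1) / 2 = j + 2 by omega]
        push_cast
        ring
  · obtain ⟨j, rfl⟩ : ∃ i, j = i + 2 := ⟨j - 2, by omega⟩
    have hs : (1 : ℤ) ≤ 2 ^ j := one_le_pow₀ one_le_two
    have e₅ : (2 * (j + 2) + 1 - 5) / 2 = j := by omega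
    have e₃ : (2 * (j + 2) + 1 - 3) / 2 = j + 1 := by omega
    have e₁ : (2 * (j + 2) + 1 - 1) / 2 = j + 2 := by omega
    refine ⟨2 * (3 * 2 ^ j) - 1, 2 * 2 ^ (j + 1) - 1, ⟨3 * 2 ^ j - 1, by ring⟩,
      ⟨2 ^ (j + 1) - 1, by ring⟩, by rw [pow_succ]; omega, by rw [pow_succ]; omega, ?_, ?_, ?_⟩
    · rw [modQAM, if_neg h3, if_neg (by omega), e₅, e₃, setOf_two_mul_sub_one_eq_oddBox,
        setOf_two_mul_sub_one_eq_oddBox, oddBox_union_oddBox]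
    · rw [Eng, if_neg (by omega), if_neg h3, if_neg (by omega), e₁, e₃]
      push_cast
      ring
    · rw [EngS, if_neg (by omega), if_neg h3, if_neg (by omega), e₁, e₃]
      push_cast
      ring

lemma isQAMProfile_modQAM {K : ℕ} (hK : 2 ≤ K) : IsQAMProfile (modQAM K) (Eng K) (EngS K) := by
  rcases eq_or_ne K 3 with rfl | h3
  · rw [show Eng 3 = 10 by norm_num [Eng], show EngS 3 = 2 by norm_num [EngS]]
    exact isQAMProfile_modQAM_three
  · obtain ⟨A, B, hA, hB, hB₁, hBA, hQ, hE, hS⟩ := exists_modQAM_eq_crossQAM hK h3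
    rw [hQ, hE, hS]
    exact crossQAM.isQAMProfile hA hB hB₁ hBA

lemma eng_sub_engS_of_ne_three {K : ℕ} (hK : 2 ≤ K) (h3 : K ≠ 3) :
    Eng K - EngS K = 4 * 2 ^ (K / 2) - 8 := by
  rcases eq_or_ne K 2 with rfl | h2
  · norm_num [Eng, EngS]
  rcases Nat.even_or_odd K with hK' | hK'
  · rw [Eng, EngS, if_neg h2, if_neg h3, if_pos (Nat.even_iff.mp hK'), if_neg h2, if_neg h3,
      if_pos (Nat.even_iff.mp hK')]
    ring
  · have hK₂ := Nat.odd_iff.mp hK'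
    rw [Eng, EngS, if_neg h2, if_neg h3, if_neg (by omega), if_neg h2, if_neg h3,
      if_neg (by omega), show (K - 1) / 2 = K / 2 by omega]
    ring

lemma eng_sub_engS_mono {p q : ℕ} (hq : 2 ≤ q) (hqp : q ≤ p) :
    Eng q - EngS q ≤ Eng p - EngS p := by
  have h3 : Eng 3 - EngS 3 = 8 := by norm_num [Eng, EngS]
  rcases eq_or_ne q 3 with rfl | hq3 <;> rcases eq_or_ne p 3 with rfl | hp3
  · exact le_rfl
  · have : (2 : ℝ) ^ 2 ≤ 2 ^ (p / 2) := pow_le_pow_right₀ one_le_two (by omega)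
    rw [h3, eng_sub_engS_of_ne_three (by omega) hp3]
    linarith
  · obtain rfl : q = 2 := by omega
    rw [h3, eng_sub_engS_of_ne_three le_rfl hq3]
    norm_num
  · have : (2 : ℝ) ^ (q / 2) ≤ 2 ^ (p / 2) := pow_le_pow_right₀ one_le_two (by omega)
    rw [eng_sub_engS_of_ne_three hq hq3, eng_sub_engS_of_ne_three (by omega) hp3]
    linarith

theorem coding_gain_min_over_qam_general (p q : ℕ) (hq : 2 ≤ q) (hqp : q ≤ p)
    (α : ℝ) :
    IsLeast
      {g : ℝ | ∃ y1 ∈ modQAM p, ∃ y2 ∈ modQAM q, ∃ z1 ∈ modQAM p, ∃ z2 ∈ modQAM q,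
        (y1, y2) ≠ (z1, z2) ∧
        g = α ^ 2 * (‖y1 - z1‖ ^ 2 + ‖y2 - z2‖ ^ 2) /
            ((1 + α ^ 2 * (‖y1‖ ^ 2 + ‖y2‖ ^ 2)) *
              (1 + α ^ 2 * (‖z1‖ ^ 2 + ‖z2‖ ^ 2)))}
      (4 * α ^ 2 /
        ((1 + α ^ 2 * (Eng p + Eng q)) * (1 + α ^ 2 * (Eng p + EngS q)))) :=
  (isQAMProfile_modQAM (hq.trans hqp)).isLeast_codingGain (isQAMProfile_modQAM hq)
    (eng_sub_engS_mono hq hqp) α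

/-- For the pair of modified QAM constellations `Z₁ = Q_p` and `Z₂ = Q_q`
(`p ≥ q ≥ 2`) and every `α > 0`, the minimum over distinct pairs
`(y₁, y₂) ≠ (ŷ₁, ŷ₂)` in `Z₁ × Z₂` of the coding-gain function equals
`4α² / ((1 + α²(E(p) + E(q))) (1 + α²(E(p) + E_s(q))))`. -/
theorem coding_gain_min_over_qam (p q : ℕ) (hq : 2 ≤ q) (hqp : q ≤ p)
    (α : ℝ) (hα : 0 < α) :
    IsLeast
      {g : ℝ | ∃ y1 ∈ modQAM p, ∃ y2 ∈ modQAM q, ∃ z1 ∈ modQAM p, ∃ z2 ∈ modQAM q,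
        (y1, y2) ≠ (z1, z2) ∧
        g = α ^ 2 * (‖y1 - z1‖ ^ 2 + ‖y2 - z2‖ ^ 2) /
            ((1 + α ^ 2 * (‖y1‖ ^ 2 + ‖y2‖ ^ 2)) *
              (1 + α ^ 2 * (‖z1‖ ^ 2 + ‖z2‖ ^ 2)))}
      (4 * α ^ 2 /
        ((1 + α ^ 2 * (Eng p + Eng q)) * (1 + α ^ 2 * (Eng p + EngS q)))) :=
  coding_gain_min_over_qam_general p q hq hqp α
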